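/- arXiv:1605.00476 — 3 statements merged into one kernel-verified Lean document; each statement's English description precedes it below -/
import Mathlib

section
/- Let θ₁, θ₂ > 0, 0 < A ≤ B, and set θ₀ = min{θ₁, θ₂} and θ₃ = max{θ₁, θ₂}, with θ₃ > n. Then for every x ∈ ℝⁿ, ∫_{ℝⁿ} dy / ((A + |y|)^{θ₁} (B + |x - y|)^{θ₂}) ≤ C · A^{n - θ₃} · (|x| + B)^{-θ₀}, where C depends only on n, θ₁, θ₂. -/
open MeasureTheory Real Set

noncomputable section

/-- Auxiliary: for `0 < a ≤ b` and `0 ≤ s ≤ t`, `b ^ s * a ^ t ≤ a ^ s * b ^ t`. -/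
lemma aux_swap {a b s t : ℝ} (ha : 0 < a) (hab : a ≤ b) (_hs : 0 ≤ s) (hst : s ≤ t) :
    b ^ s * a ^ t ≤ a ^ s * b ^ t := by
  have hb : 0 < b := lt_of_lt_of_le ha hab
  have hat : a ^ t = a ^ s * a ^ (t - s) := by
    rw [← Real.rpow_add ha]; congr 1; ring
  have hbt : b ^ t = b ^ s * b ^ (t - s) := by
    rw [← Real.rpow_add hb]; congr 1; ring
  rw [hat, hbt]
  calc b ^ s * (a ^ s * a ^ (t - s)) = a ^ s * b ^ s * a ^ (t - s) := by ring
    _ ≤ a ^ s * b ^ s * b ^ (t - s) :=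
        mul_le_mul_of_nonneg_left (Real.rpow_le_rpow ha.le hab (by linarith))
          (by positivity)
    _ = a ^ s * (b ^ s * b ^ (t - s)) := by ring

/-- Auxiliary: `max a b ^ min s t * min a b ^ max s t ≤ a ^ s * b ^ t`. -/
lemma aux_minmax {a b s t : ℝ} (ha : 0 < a) (hb : 0 < b) (hs : 0 < s) (ht : 0 < t) :
    max a b ^ min s t * min a b ^ max s t ≤ a ^ s * b ^ t := by
  rcases le_total s t with hst | hst <;> rcases le_total a b with hab | hab
  · rw [min_eq_left hst, max_eq_right hst, max_eq_right hab, min_eq_left hab]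
    exact aux_swap ha hab hs.le hst
  · rw [min_eq_left hst, max_eq_right hst, max_eq_left hab, min_eq_right hab]
  · rw [min_eq_right hst, max_eq_left hst, max_eq_right hab, min_eq_left hab,
      mul_comm]
  · rw [min_eq_right hst, max_eq_left hst, max_eq_left hab, min_eq_right hab]
    exact le_of_le_of_eq (aux_swap hb hab ht.le hst) (mul_comm _ _)

theorem stmt0 (n : ℕ) (hn : 1 ≤ n) (θ₁ θ₂ : ℝ) (hθ₁ : 0 < θ₁) (hθ₂ : 0 < θ₂)
    (hθ₃ : (n : ℝ) < max θ₁ θ₂) :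
    ∃ C > 0, ∀ (A B : ℝ), 0 < A → A ≤ B →
      ∀ x : EuclideanSpace ℝ (Fin n),
        (∫ y : EuclideanSpace ℝ (Fin n),
            1 / ((A + ‖y‖) ^ θ₁ * (B + ‖x - y‖) ^ θ₂)) ≤
          C * A ^ ((n : ℝ) - max θ₁ θ₂) * (‖x‖ + B) ^ (-(min θ₁ θ₂)) := by
  set θ₀ := min θ₁ θ₂ with hθ₀def
  set θ₃ := max θ₁ θ₂ with hθ₃def
  have hθ₀ : 0 < θ₀ := lt_min hθ₁ hθ₂
  have hθ₃pos : 0 < θ₃ := lt_of_le_of_lt (Nat.cast_nonneg n) hθ₃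
  have hfr : (Module.finrank ℝ (EuclideanSpace ℝ (Fin n)) : ℝ) = (n : ℝ) := by
    simp [finrank_euclideanSpace]
  haveI : Nontrivial (EuclideanSpace ℝ (Fin n)) :=
    Module.nontrivial_of_finrank_pos (R := ℝ)
      (by simp only [finrank_euclideanSpace, Fintype.card_fin]; omega)
  -- the base integral
  set I := ∫ z : EuclideanSpace ℝ (Fin n), (1 + ‖z‖) ^ (-θ₃) with hI
  have hint : Integrable (fun z : EuclideanSpace ℝ (Fin n) => (1 + ‖z‖) ^ (-θ₃)) :=
    integrable_one_add_norm (by rw [hfr]; exact hθ₃)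
  have hIpos : 0 < I := by
    rw [hI]
    apply (integral_pos_iff_support_of_nonneg (fun z => Real.rpow_nonneg (by positivity) _) hint).2
    have hsupp : (Function.support fun z : EuclideanSpace ℝ (Fin n) =>
        (1 + ‖z‖) ^ (-θ₃)) = Set.univ := by
      ext z
      simp only [Function.mem_support, Set.mem_univ, iff_true]
      positivity
    rw [hsupp, MeasureTheory.measure_univ_of_isAddLeftInvariant]
    exact ENNReal.zero_lt_top
  refine ⟨2 ^ θ₀ * (2 * I), by positivity, fun A B hA hAB x => ?_⟩
  have hB : 0 < B := lt_of_lt_of_le hA hAB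
  have hApow : (A ^ Module.finrank ℝ (EuclideanSpace ℝ (Fin n)) : ℝ) = A ^ (n : ℝ) := by
    rw [← Real.rpow_natCast]
    norm_cast
    simp [finrank_euclideanSpace]
  -- scaled integral identity
  have scaled : (∫ y : EuclideanSpace ℝ (Fin n), (A + ‖y‖) ^ (-θ₃))
      = A ^ ((n : ℝ) - θ₃) * I := by
    have key := MeasureTheory.Measure.integral_comp_smul_of_nonneg (μ := volume)
      (fun y : EuclideanSpace ℝ (Fin n) => (A + ‖y‖) ^ (-θ₃)) A (hR := hA.le)
    have heq : (fun z : EuclideanSpace ℝ (Fin n) =>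
        (fun y : EuclideanSpace ℝ (Fin n) => (A + ‖y‖) ^ (-θ₃)) (A • z))
        = fun z : EuclideanSpace ℝ (Fin n) => A ^ (-θ₃) * (1 + ‖z‖) ^ (-θ₃) := by
      ext z
      simp only
      rw [norm_smul, Real.norm_of_nonneg hA.le, ← Real.mul_rpow hA.le (by positivity)]
      ring_nf
    rw [heq, integral_const_mul, smul_eq_mul, hApow] at key
    -- key : A ^ (-θ₃) * I = (A ^ (n:ℝ))⁻¹ * ∫ ...
    have h2 : (∫ y : EuclideanSpace ℝ (Fin n), (A + ‖y‖) ^ (-θ₃))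
        = A ^ (n : ℝ) * (A ^ (-θ₃) * I) := by
      rw [key, ← mul_assoc, mul_inv_cancel₀ (by positivity), one_mul]
    rw [h2, ← mul_assoc, ← Real.rpow_add hA, ← sub_eq_add_neg]
  -- integrability of the dominating functions
  have hint1 : Integrable (fun y : EuclideanSpace ℝ (Fin n) => (A + ‖y‖) ^ (-θ₃)) := by
    refine Integrable.mono' (hint.const_mul ((min A 1) ^ (-θ₃)))
      (Measurable.aestronglyMeasurable (by fun_prop)) ?_
    refine Filter.Eventually.of_forall fun y => ?_
    have hmin : 0 < min A 1 := lt_min hA one_pos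
    have h1 : min A 1 * (1 + ‖y‖) ≤ A + ‖y‖ := by
      have h2 : min A 1 ≤ A := min_le_left _ _
      have h3 : min A 1 ≤ 1 := min_le_right _ _
      have h4 : 0 ≤ ‖y‖ := norm_nonneg _
      nlinarith
    rw [Real.norm_of_nonneg (Real.rpow_nonneg (by positivity) _),
      ← Real.mul_rpow hmin.le (by positivity)]
    exact Real.rpow_le_rpow_of_nonpos (by positivity) h1 (by linarith)
  have hint2 : Integrable (fun y : EuclideanSpace ℝ (Fin n) => (A + ‖x - y‖) ^ (-θ₃)) :=
    hint1.comp_sub_left x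
  have scaled2 : (∫ y : EuclideanSpace ℝ (Fin n), (A + ‖x - y‖) ^ (-θ₃))
      = A ^ ((n : ℝ) - θ₃) * I := by
    rw [MeasureTheory.integral_sub_left_eq_self
      (fun y : EuclideanSpace ℝ (Fin n) => (A + ‖y‖) ^ (-θ₃)) volume x]
    exact scaled
  -- the pointwise bound
  have ptwise : ∀ y : EuclideanSpace ℝ (Fin n),
      1 / ((A + ‖y‖) ^ θ₁ * (B + ‖x - y‖) ^ θ₂)
        ≤ 2 ^ θ₀ * (‖x‖ + B) ^ (-θ₀) *
          ((A + ‖y‖) ^ (-θ₃) + (A + ‖x - y‖) ^ (-θ₃)) := by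
    intro y
    set a := A + ‖y‖ with hadef
    set b := B + ‖x - y‖ with hbdef
    have hapos : 0 < a := by positivity
    have hbpos : 0 < b := by positivity
    have hxB : 0 < ‖x‖ + B := by positivity
    -- max a b ≥ (‖x‖ + B)/2
    have hmax : (‖x‖ + B) / 2 ≤ max a b := by
      have htri : ‖x‖ ≤ ‖y‖ + ‖x - y‖ := by
        calc ‖x‖ = ‖y + (x - y)‖ := by rw [show y + (x - y) = x by abel]
        _ ≤ ‖y‖ + ‖x - y‖ := norm_add_le _ _
      have hsum : ‖x‖ + B ≤ a + b := by
        rw [hadef, hbdef]; linarith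
      have h2 : a + b ≤ 2 * max a b := by
        have := le_max_left a b; have := le_max_right a b; linarith
      linarith
    -- min a b ≥ A + min ‖y‖ ‖x - y‖
    have hmin : A + min ‖y‖ ‖x - y‖ ≤ min a b := by
      rcases le_total (‖y‖) (‖x - y‖) with h | h
      · rw [min_eq_left h]
        exact le_min (le_of_eq hadef.symm) (by rw [hbdef]; exact add_le_add hAB h)
      · rw [min_eq_right h]
        exact le_min (by rw [hadef]; exact add_le_add le_rfl h)
          (by rw [hbdef]; exact add_le_add hAB le_rfl)
    have hAmin : 0 < A + min ‖y‖ ‖x - y‖ := by positivity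
    -- lower bound for the product
    have hprod : ((‖x‖ + B) / 2) ^ θ₀ * (A + min ‖y‖ ‖x - y‖) ^ θ₃ ≤ a ^ θ₁ * b ^ θ₂ := by
      calc ((‖x‖ + B) / 2) ^ θ₀ * (A + min ‖y‖ ‖x - y‖) ^ θ₃
          ≤ max a b ^ θ₀ * min a b ^ θ₃ := by
            have h1 : ((‖x‖ + B) / 2) ^ θ₀ ≤ max a b ^ θ₀ :=
              Real.rpow_le_rpow (by positivity) hmax hθ₀.le
            have h2 : (A + min ‖y‖ ‖x - y‖) ^ θ₃ ≤ min a b ^ θ₃ :=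
              Real.rpow_le_rpow hAmin.le hmin hθ₃pos.le
            exact mul_le_mul h1 h2 (Real.rpow_nonneg hAmin.le _)
              (Real.rpow_nonneg (by positivity) _)
        _ ≤ a ^ θ₁ * b ^ θ₂ := aux_minmax hapos hbpos hθ₁ hθ₂
    have hub : 1 / (a ^ θ₁ * b ^ θ₂)
        ≤ 1 / (((‖x‖ + B) / 2) ^ θ₀ * (A + min ‖y‖ ‖x - y‖) ^ θ₃) :=
      one_div_le_one_div_of_le (by positivity) hprod
    refine hub.trans ?_
    have heq : 1 / (((‖x‖ + B) / 2) ^ θ₀ * (A + min ‖y‖ ‖x - y‖) ^ θ₃)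
        = 2 ^ θ₀ * (‖x‖ + B) ^ (-θ₀) * (A + min ‖y‖ ‖x - y‖) ^ (-θ₃) := by
      rw [Real.div_rpow hxB.le (by norm_num : (0:ℝ) ≤ 2)]
      rw [Real.rpow_neg hxB.le, Real.rpow_neg hAmin.le]
      field_simp
    rw [heq]
    refine mul_le_mul_of_nonneg_left ?_ (by positivity)
    rcases le_total (‖y‖) (‖x - y‖) with h | h
    · rw [min_eq_left h, ← hadef]
      have hnn : (0:ℝ) ≤ (A + ‖x - y‖) ^ (-θ₃) := Real.rpow_nonneg (by positivity) _
      linarith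
    · rw [min_eq_right h]
      have hnn : (0:ℝ) ≤ (A + ‖y‖) ^ (-θ₃) := Real.rpow_nonneg (by positivity) _
      linarith
  -- combine: monotone integral against the dominating function
  have hg : Integrable (fun y : EuclideanSpace ℝ (Fin n) =>
      2 ^ θ₀ * (‖x‖ + B) ^ (-θ₀) * ((A + ‖y‖) ^ (-θ₃) + (A + ‖x - y‖) ^ (-θ₃))) :=
    ((hint1.add hint2).const_mul _)
  have hmono := integral_mono_of_nonneg
    (f := fun y : EuclideanSpace ℝ (Fin n) =>
      1 / ((A + ‖y‖) ^ θ₁ * (B + ‖x - y‖) ^ θ₂))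
    (g := fun y : EuclideanSpace ℝ (Fin n) =>
      2 ^ θ₀ * (‖x‖ + B) ^ (-θ₀) * ((A + ‖y‖) ^ (-θ₃) + (A + ‖x - y‖) ^ (-θ₃)))
    (Filter.Eventually.of_forall (fun y => by positivity)) hg
    (Filter.Eventually.of_forall ptwise)
  refine hmono.trans ?_
  rw [integral_const_mul, integral_add hint1 hint2, scaled, scaled2]
  apply le_of_eq
  ring
end
end

section
/- Let n ≥ 1, λ₁ > 2, and 0 < α ≤ n(λ₁ - 2)/2. Choose ε₁ > 0 with 2n + 2α ≤ 2n + 2ε₁ ≤ nλ₁. Then for all t₁ > 0 and all x₁, z₁ ∈ ℝⁿ, ∫_{ℝⁿ} ∫_{ℝⁿ} (t₁/(t₁ + |x₁ - y₁|))^{nλ₁/2} · t₁^α/(t₁ + |y₁ - z₁|)^{n+α} dy₁ dx₁ ≤ C t₁ⁿ, where C depends only on n, λ₁, α. -/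
open MeasureTheory Real Set

noncomputable section

/-! The inner integral is a convolution, so the double integral is the product of the integrals
of the kernels `(t / (t + ‖u‖)) ^ p`, `p = n λ₁ / 2`, and
`t ^ α / (t + ‖u‖) ^ (n + α) = t ^ (-n) (t / (t + ‖u‖)) ^ (n + α)`. Dilating by `t` turns
`(t / (t + ‖u‖)) ^ q` into `(1 + ‖u‖) ^ (-q)`, integrable because `q > n`, at the cost of a
factor `t ^ n`; so the double integral is exactly `t ^ n` times a constant. -/

theorem integral_integral_mul_sub_mul_sub {G : Type*} [AddCommGroup G] [MeasurableSpace G]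
    [MeasurableAdd₂ G] [MeasurableNeg G] {μ : Measure G} [SFinite μ] [μ.IsAddRightInvariant]
    {f g : G → ℝ} (hf : Integrable f μ) (hg : Integrable g μ) (z : G) :
    ∫ x, ∫ y, f (x - y) * g (y - z) ∂μ ∂μ = (∫ x, f x ∂μ) * ∫ x, g x ∂μ := by
  have := integral_convolution (ContinuousLinearMap.mul ℝ ℝ) (hg.comp_sub_right z) hf
    (μ := μ) (ν := μ)
  simp only [convolution_def, ContinuousLinearMap.mul_apply', integral_sub_right_eq_self] at this
  simp_rw [mul_comm (f _)]
  rw [this, mul_comm]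

section HaarScaling

variable {E : Type*} [NormedAddCommGroup E] [NormedSpace ℝ E] {t p : ℝ}

theorem div_add_norm_smul_rpow (ht : 0 < t) (u : E) :
    (t / (t + ‖t • u‖)) ^ p = (1 + ‖u‖) ^ (-p) := by
  rw [norm_smul, norm_of_nonneg ht.le, ← mul_one_add, div_mul_cancel_left₀ ht.ne',
    inv_rpow (by positivity), rpow_neg (by positivity)]

variable [FiniteDimensional ℝ E] [MeasurableSpace E] [BorelSpace E] (μ : Measure E)
  [μ.IsAddHaarMeasure]

theorem integrable_div_add_norm_rpow (ht : 0 < t) (hp : (Module.finrank ℝ E : ℝ) < p) :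
    Integrable (fun u : E ↦ (t / (t + ‖u‖)) ^ p) μ := by
  rw [← integrable_comp_smul_iff μ _ ht.ne']
  simp_rw [div_add_norm_smul_rpow ht]
  exact integrable_one_add_norm hp

theorem integral_div_add_norm_rpow (ht : 0 < t) :
    ∫ u : E, (t / (t + ‖u‖)) ^ p ∂μ =
      t ^ (Module.finrank ℝ E : ℝ) * ∫ u : E, (1 + ‖u‖) ^ (-p) ∂μ := by
  have := Measure.integral_comp_smul_of_nonneg μ (fun u : E ↦ (t / (t + ‖u‖)) ^ p) t
    (hR := ht.le)
  simp_rw [div_add_norm_smul_rpow ht] at this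
  rw [this, smul_eq_mul, rpow_natCast, mul_inv_cancel_left₀ (by positivity)]

end HaarScaling

theorem rpow_div_add_rpow_eq {t s : ℝ} (a b : ℝ) (ht : 0 < t) (hs : 0 ≤ s) :
    t ^ a / (t + s) ^ (b + a) = t ^ (-b) * (t / (t + s)) ^ (b + a) := by
  have hts : 0 < t + s := by positivity
  rw [div_rpow ht.le hts.le, rpow_add ht, rpow_neg ht.le]
  field_simp

theorem stmt1_general (n : ℕ) (hn : 1 ≤ n) (lam₁ α : ℝ) (hlam : 2 < lam₁) (hα : 0 < α) :
    ∃ C > 0, ∀ (t₁ : ℝ), 0 < t₁ → ∀ x₁ z₁ : EuclideanSpace ℝ (Fin n),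
      (∫ x₁ : EuclideanSpace ℝ (Fin n), ∫ y₁ : EuclideanSpace ℝ (Fin n),
          (t₁ / (t₁ + ‖x₁ - y₁‖)) ^ ((n : ℝ) * lam₁ / 2) *
            (t₁ ^ α / (t₁ + ‖y₁ - z₁‖) ^ ((n : ℝ) + α))) ≤
        C * t₁ ^ (n : ℝ) := by
  set E := EuclideanSpace ℝ (Fin n)
  set p := (n : ℝ) * lam₁ / 2
  have hdim : (Module.finrank ℝ E : ℝ) = n := by simp [E]
  have hp : (Module.finrank ℝ E : ℝ) < p := by
    have : (1 : ℝ) ≤ n := by exact_mod_cast hn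
    rw [hdim]
    show (n : ℝ) < n * lam₁ / 2
    nlinarith
  have hq : (Module.finrank ℝ E : ℝ) < n + α := by rw [hdim]; linarith
  set Cp := ∫ u : E, (1 + ‖u‖) ^ (-p)
  set Cq := ∫ u : E, (1 + ‖u‖) ^ (-(n + α))
  have hCp : 0 ≤ Cp := integral_nonneg fun u ↦ by positivity
  have hCq : 0 ≤ Cq := integral_nonneg fun u ↦ by positivity
  refine ⟨Cp * Cq + 1, by positivity, fun t ht _ z ↦ ?_⟩
  have htn : 0 < t ^ (n : ℝ) := by positivity
  calc (∫ x : E, ∫ y : E, (t / (t + ‖x - y‖)) ^ p * (t ^ α / (t + ‖y - z‖) ^ ((n : ℝ) + α)))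
      = ∫ x : E, ∫ y : E, (t / (t + ‖x - y‖)) ^ p *
          (t ^ (-(n : ℝ)) * (t / (t + ‖y - z‖)) ^ ((n : ℝ) + α)) := by
        congr! 4 with x y
        rw [rpow_div_add_rpow_eq α (n : ℝ) ht (norm_nonneg (y - z))]
    _ = (∫ u : E, (t / (t + ‖u‖)) ^ p) *
          ∫ u : E, t ^ (-(n : ℝ)) * (t / (t + ‖u‖)) ^ ((n : ℝ) + α) :=
        integral_integral_mul_sub_mul_sub (integrable_div_add_norm_rpow _ ht hp)
          ((integrable_div_add_norm_rpow _ ht hq).const_mul _) z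
    _ = t ^ (n : ℝ) * Cp * Cq := by
        rw [integral_const_mul, integral_div_add_norm_rpow _ ht, integral_div_add_norm_rpow _ ht,
          hdim, rpow_neg ht.le]
        field_simp
        rfl
    _ ≤ (Cp * Cq + 1) * t ^ (n : ℝ) := by nlinarith [mul_nonneg hCp hCq]

theorem stmt1 (n : ℕ) (hn : 1 ≤ n) (lam₁ α ε₁ : ℝ) (hlam : 2 < lam₁) (hα : 0 < α)
    (hαn : α ≤ (n : ℝ) * (lam₁ - 2) / 2) (hε₁ : 0 < ε₁)
    (hε₁l : 2 * (n : ℝ) + 2 * α ≤ 2 * (n : ℝ) + 2 * ε₁)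
    (hε₁u : 2 * (n : ℝ) + 2 * ε₁ ≤ (n : ℝ) * lam₁) :
    ∃ C > 0, ∀ (t₁ : ℝ), 0 < t₁ → ∀ x₁ z₁ : EuclideanSpace ℝ (Fin n),
      (∫ x₁ : EuclideanSpace ℝ (Fin n), ∫ y₁ : EuclideanSpace ℝ (Fin n),
          (t₁ / (t₁ + ‖x₁ - y₁‖)) ^ ((n : ℝ) * lam₁ / 2) *
            (t₁ ^ α / (t₁ + ‖y₁ - z₁‖) ^ ((n : ℝ) + α))) ≤
        C * t₁ ^ (n : ℝ) :=
  stmt1_general n hn lam₁ α hlam hα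
end
end

section
/- Let m ≥ 1, λ₂ > 2, 0 < β ≤ m(λ₂-2)/2, and let J ⊂ ℝᵐ be a cube with side length l_J. Then for all x₂, z₂ ∈ ℝᵐ with z₂ ∈ J and |x₂ - z₂| ≥ 4√m l_J, ∫_0^{2l_J} ∫_{ℝᵐ} ∫_J (t₂/(t₂ + |x₂ - y₂|))^{mλ₂} · t₂^{2β}/(t₂ + |y₂ - z₂'|)^{2m+2β} dz₂' (dy₂ dt₂)/t₂^{m+1} ≤ C l_J^{m+2β} |x₂ - z₂|^{-2m-2β}, where C depends only on m, λ₂, β. -/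
open MeasureTheory Real Set

noncomputable section

/-- The axis-parallel cube in `ℝᵐ` with center `z` and side length `l`. -/
def cube {m : ℕ} (z : EuclideanSpace ℝ (Fin m)) (l : ℝ) : Set (EuclideanSpace ℝ (Fin m)) :=
  {y | ∀ i, |y i - z i| ≤ l / 2}

/-!
Write `R = ‖x₂ - z₂‖`, `K = 3R/8`, `p = 2m + 2β` and `q = mλ₂`, so that `m < p ≤ q`. The cube has
diameter `√m l_J ≤ R/4`, so all its points `z'` lie at distance `≥ 2K` from `x₂`, and then every
`y` is at distance `≥ K` from `x₂` or from `z'`. In the first case `(t/(t+|x₂-y|))^q ≤ (t/K)^p`,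
in the second `(t+|y-z'|)^{-p} ≤ K^{-p}`; either way the integrand is bounded by a sum of two terms
each containing one kernel `(t+|u|)^{-r}` with `r > m`, whose integral over `ℝᵐ` is `t^{m-r}`
times a constant. Hence the `y, z'` integral is `≲ t^{m+2β} K^{-p} |J|`, and integrating
`t^{2β-1}` over `(0, 2l_J)` gives `l_J^{m+2β} R^{-2m-2β}`.
-/

lemma rpow_div_mul_div_rpow_le {t a b K p q s : ℝ} (ht : 0 < t) (hta : t ≤ a) (hb : 0 < b)
    (hK : 0 < K) (hp : 0 ≤ p) (hpq : p ≤ q) (hs : 0 ≤ s) (hsplit : K ≤ a ∨ K ≤ b) :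
    (t / a) ^ q * (s / b ^ p) ≤ (t / K) ^ p * s * b ^ (-p) + t ^ q * a ^ (-q) * s * K ^ (-p) := by
  have ha : 0 < a := ht.trans_le hta
  rw [div_eq_mul_inv s, ← rpow_neg hb.le]
  rcases hsplit with hKa | hKb
  · have hquot : (t / a) ^ q ≤ (t / K) ^ p :=
      calc (t / a) ^ q ≤ (t / a) ^ p :=
            rpow_le_rpow_of_exponent_ge (by positivity) ((div_le_one ha).2 hta) hpq
        _ ≤ (t / K) ^ p := by gcongr
    have : 0 ≤ t ^ q * a ^ (-q) * s * K ^ (-p) := by positivity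
    nlinarith [mul_le_mul_of_nonneg_right hquot (by positivity : 0 ≤ s * b ^ (-p))]
  · have hb' : b ^ (-p) ≤ K ^ (-p) := rpow_le_rpow_of_nonpos hK hKb (neg_nonpos.2 hp)
    rw [div_rpow ht.le ha.le, div_eq_mul_inv, ← rpow_neg ha.le]
    have : 0 ≤ (t / K) ^ p * s * b ^ (-p) := by positivity
    nlinarith [mul_le_mul_of_nonneg_left hb' (by positivity : 0 ≤ t ^ q * a ^ (-q) * s)]

lemma le_norm_sub_or_le_norm_sub {F : Type*} [SeminormedAddCommGroup F] {x y z : F} {K : ℝ}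
    (h : 2 * K ≤ ‖x - z‖) : K ≤ ‖x - y‖ ∨ K ≤ ‖y - z‖ := by
  by_contra! hlt
  linarith [norm_sub_le_norm_sub_add_norm_sub x y z]

lemma setIntegral_Ioo_le_of_le_rpow {f : ℝ → ℝ} {a σ D : ℝ} (ha : 0 ≤ a) (hσ : 0 < σ)
    (hf0 : ∀ t ∈ Ioo 0 a, 0 ≤ f t) (hf : ∀ t ∈ Ioo 0 a, f t ≤ t ^ (σ - 1) * D) :
    ∫ t in Ioo 0 a, f t ≤ a ^ σ / σ * D := by
  have hint : IntegrableOn (fun t ↦ t ^ (σ - 1) * D) (Ioo 0 a) :=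
    ((intervalIntegral.intervalIntegrable_rpow' (by linarith)).1.mono_set
      Ioo_subset_Ioc_self).mul_const D
  calc ∫ t in Ioo 0 a, f t ≤ ∫ t in Ioo 0 a, t ^ (σ - 1) * D :=
        integral_mono_of_nonneg (ae_restrict_of_forall_mem measurableSet_Ioo hf0) hint
          (ae_restrict_of_forall_mem measurableSet_Ioo hf)
    _ = a ^ σ / σ * D := by
        rw [integral_mul_const, ← integral_Ioc_eq_integral_Ioo,
          ← intervalIntegral.integral_of_le ha, integral_rpow (Or.inl (by linarith)),
          sub_add_cancel, zero_rpow hσ.ne']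
        ring

section Kernel

open Module

variable {E : Type*} [NormedAddCommGroup E] [NormedSpace ℝ E] [FiniteDimensional ℝ E]
  [MeasurableSpace E] [BorelSpace E] (μ : Measure E) [μ.IsAddHaarMeasure]

omit [FiniteDimensional ℝ E] [MeasurableSpace E] [BorelSpace E] in
lemma add_norm_smul_rpow_neg {t : ℝ} (ht : 0 < t) (r : ℝ) (v : E) :
    (t + ‖t • v‖) ^ (-r) = t ^ (-r) * (1 + ‖v‖) ^ (-r) := by
  rw [norm_smul, norm_of_nonneg ht.le, ← mul_one_add, mul_rpow ht.le (by positivity)]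

lemma integrable_add_norm_rpow_neg {t r : ℝ} (ht : 0 < t) (hr : (finrank ℝ E : ℝ) < r) :
    Integrable (fun u : E ↦ (t + ‖u‖) ^ (-r)) μ := by
  refine (integrable_comp_smul_iff μ _ ht.ne').1 ?_
  simpa only [add_norm_smul_rpow_neg ht] using (integrable_one_add_norm hr).const_mul (t ^ (-r))

lemma integral_add_norm_rpow_neg {t : ℝ} (ht : 0 < t) (r : ℝ) :
    ∫ u : E, (t + ‖u‖) ^ (-r) ∂μ = t ^ (finrank ℝ E - r) * ∫ u : E, (1 + ‖u‖) ^ (-r) ∂μ := by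
  have h := Measure.integral_comp_smul μ (fun u : E ↦ (t + ‖u‖) ^ (-r)) t
  simp only [add_norm_smul_rpow_neg ht, integral_const_mul, smul_eq_mul] at h
  rw [abs_of_pos (by positivity), ← rpow_natCast, ← rpow_neg ht.le] at h
  rw [sub_eq_add_neg, rpow_add ht, mul_assoc, h, ← mul_assoc, ← rpow_add ht, add_neg_cancel,
    rpow_zero, one_mul]

lemma integral_one_add_norm_rpow_neg_pos {r : ℝ} (hr : (finrank ℝ E : ℝ) < r) :
    0 < ∫ u : E, (1 + ‖u‖) ^ (-r) ∂μ := by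
  rw [integral_pos_iff_support_of_nonneg (fun u ↦ by positivity) (integrable_one_add_norm hr)]
  have hne : ∀ u : E, (1 + ‖u‖) ^ (-r) ≠ 0 := fun u ↦ (rpow_pos_of_pos (by positivity) _).ne'
  simp [Function.support, hne, NeZero.ne μ]

lemma integral_setIntegral_comp_sub {k : E → ℝ} (hk : Integrable k μ) {J : Set E}
    (hJ : μ J ≠ ⊤) :
    Integrable (fun y ↦ ∫ z in J, k (y - z) ∂μ) μ ∧
      ∫ y, ∫ z in J, k (y - z) ∂μ ∂μ = μ.real J * ∫ u, k u ∂μ := by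
  have : IsFiniteMeasure (μ.restrict J) := isFiniteMeasure_restrict.2 hJ
  have h := (integrable_const (1 : ℝ)).convolution_integrand (ContinuousLinearMap.lsmul ℝ ℝ) hk
    (μ := μ) (ν := μ.restrict J)
  simp only [ContinuousLinearMap.lsmul_apply, one_smul] at h
  refine ⟨h.integral_prod_left, ?_⟩
  rw [integral_integral_swap h]
  simp only [integral_sub_right_eq_self (μ := μ) k, setIntegral_const, smul_eq_mul]

lemma integral_setIntegral_kernel_le {x : E} {J : Set E} (hJm : MeasurableSet J)
    (hJ : μ J ≠ ⊤) {t K p q s : ℝ} (ht : 0 < t) (hK : 0 < K) (hp : (finrank ℝ E : ℝ) < p)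
    (hpq : p ≤ q) (hs : 0 ≤ s) (hJx : ∀ z ∈ J, 2 * K ≤ ‖x - z‖) :
    ∫ y, ∫ z in J, (t / (t + ‖x - y‖)) ^ q * (s / (t + ‖y - z‖) ^ p) ∂μ ∂μ ≤
      t ^ (finrank ℝ E : ℝ) * s * K ^ (-p) * μ.real J *
        ((∫ u, (1 + ‖u‖) ^ (-p) ∂μ) + ∫ u, (1 + ‖u‖) ^ (-q) ∂μ) := by
  set d : ℝ := (finrank ℝ E : ℝ)
  have hkp := integrable_add_norm_rpow_neg μ ht hp
  have hkq : Integrable (fun y ↦ (t + ‖x - y‖) ^ (-q)) μ :=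
    (integrable_add_norm_rpow_neg μ ht (hp.trans_le hpq)).comp_sub_left x
  obtain ⟨hconv, hconv_eq⟩ := integral_setIntegral_comp_sub μ hkp hJ
  have : IsFiniteMeasure (μ.restrict J) := isFiniteMeasure_restrict.2 hJ
  have hinner : ∀ y, ∫ z in J, (t / (t + ‖x - y‖)) ^ q * (s / (t + ‖y - z‖) ^ p) ∂μ ≤
      (t / K) ^ p * s * ∫ z in J, (t + ‖y - z‖) ^ (-p) ∂μ +
        t ^ q * (t + ‖x - y‖) ^ (-q) * s * K ^ (-p) * μ.real J := by
    intro y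
    have hmaj : IntegrableOn (fun z ↦ (t / K) ^ p * s * (t + ‖y - z‖) ^ (-p) +
        t ^ q * (t + ‖x - y‖) ^ (-q) * s * K ^ (-p)) J μ :=
      ((hkp.comp_sub_left y).integrableOn.const_mul _).add (integrable_const _)
    refine (integral_mono_of_nonneg (.of_forall fun z ↦ by positivity) hmaj
      (ae_restrict_of_forall_mem hJm fun z hz ↦ ?_)).trans_eq ?_
    · exact rpow_div_mul_div_rpow_le ht (le_add_of_nonneg_right (norm_nonneg _)) (by positivity) hK
        ((Nat.cast_nonneg _).trans hp.le) hpq hs ((le_norm_sub_or_le_norm_sub (hJx z hz)).imp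
          (fun h ↦ h.trans (le_add_of_nonneg_left ht.le))
          (fun h ↦ h.trans (le_add_of_nonneg_left ht.le)))
    · rw [integral_add ((hkp.comp_sub_left y).integrableOn.const_mul _) (integrable_const _),
        integral_const_mul, setIntegral_const, smul_eq_mul]
      ring
  calc ∫ y, ∫ z in J, (t / (t + ‖x - y‖)) ^ q * (s / (t + ‖y - z‖) ^ p) ∂μ ∂μ
      ≤ ∫ y, ((t / K) ^ p * s * ∫ z in J, (t + ‖y - z‖) ^ (-p) ∂μ +
          t ^ q * (t + ‖x - y‖) ^ (-q) * s * K ^ (-p) * μ.real J) ∂μ :=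
        integral_mono_of_nonneg (.of_forall fun y ↦ integral_nonneg fun z ↦ by positivity)
          ((hconv.const_mul _).add ((((hkq.const_mul _).mul_const _).mul_const _).mul_const _))
          (.of_forall hinner)
    _ = t ^ d * s * K ^ (-p) * μ.real J *
        ((∫ u, (1 + ‖u‖) ^ (-p) ∂μ) + ∫ u, (1 + ‖u‖) ^ (-q) ∂μ) := by
      rw [integral_add (hconv.const_mul _)
          ((((hkq.const_mul _).mul_const _).mul_const _).mul_const _),
        integral_const_mul, hconv_eq, integral_mul_const, integral_mul_const, integral_mul_const,
        integral_const_mul, integral_sub_left_eq_self (fun u ↦ (t + ‖u‖) ^ (-q)) μ x,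
        integral_add_norm_rpow_neg μ ht, integral_add_norm_rpow_neg μ ht,
        div_rpow ht.le hK.le, div_eq_mul_inv, ← rpow_neg hK.le]
      have hp' : t ^ p * t ^ (d - p) = t ^ d := by rw [← rpow_add ht]; ring_nf
      have hq' : t ^ q * t ^ (d - q) = t ^ d := by rw [← rpow_add ht]; ring_nf
      linear_combination (s * K ^ (-p) * μ.real J * ∫ u, (1 + ‖u‖) ^ (-p) ∂μ) * hp' +
        (s * K ^ (-p) * μ.real J * ∫ u, (1 + ‖u‖) ^ (-q) ∂μ) * hq'

lemma integral_Ioo_integral_setIntegral_kernel_le {x : E} {J : Set E} (hJm : MeasurableSet J)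
    (hJ : μ J ≠ ⊤) {a K p q σ : ℝ} (ha : 0 ≤ a) (hK : 0 < K) (hp : (finrank ℝ E : ℝ) < p)
    (hpq : p ≤ q) (hσ : 0 < σ) (hJx : ∀ z ∈ J, 2 * K ≤ ‖x - z‖) :
    ∫ t in Ioo 0 a, ∫ y, (∫ z in J, (t / (t + ‖x - y‖)) ^ q * (t ^ σ / (t + ‖y - z‖) ^ p) ∂μ) /
        t ^ ((finrank ℝ E : ℝ) + 1) ∂μ ≤
      a ^ σ / σ * (K ^ (-p) * μ.real J *
        ((∫ u, (1 + ‖u‖) ^ (-p) ∂μ) + ∫ u, (1 + ‖u‖) ^ (-q) ∂μ)) := by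
  refine setIntegral_Ioo_le_of_le_rpow ha hσ (fun t ht ↦ ?_) fun t ht ↦ ?_
  · have := ht.1
    exact integral_nonneg fun y ↦ div_nonneg (integral_nonneg fun z ↦ by positivity)
      (by positivity)
  · have ht := ht.1
    rw [integral_div, div_le_iff₀ (by positivity)]
    refine (integral_setIntegral_kernel_le μ hJm hJ ht hK hp hpq (by positivity) hJx).trans_eq ?_
    have htσ : t ^ (finrank ℝ E : ℝ) * t ^ σ = t ^ (σ - 1) * t ^ ((finrank ℝ E : ℝ) + 1) := by
      rw [← rpow_add ht, ← rpow_add ht]; ring_nf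
    linear_combination (K ^ (-p) * μ.real J *
      ((∫ u, (1 + ‖u‖) ^ (-p) ∂μ) + ∫ u, (1 + ‖u‖) ^ (-q) ∂μ)) * htσ

end Kernel

section Cube

variable {m : ℕ}

lemma norm_sub_le_of_mem_cube {z a b : EuclideanSpace ℝ (Fin m)} {l : ℝ} (hl : 0 ≤ l)
    (ha : a ∈ cube z l) (hb : b ∈ cube z l) : ‖a - b‖ ≤ √m * l := by
  have hcoord : ∀ i, (a i - b i) ^ 2 ≤ l ^ 2 := fun i ↦ by
    have := (abs_sub_le (a i) (z i) (b i)).trans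
      (add_le_add (ha i) (abs_sub_comm (z i) (b i) ▸ hb i))
    exact sq_le_sq' (by linarith [neg_abs_le (a i - b i)]) ((le_abs_self _).trans (by linarith))
  calc ‖a - b‖ = √(∑ i, (a i - b i) ^ 2) := by simp [EuclideanSpace.norm_eq]
    _ ≤ √(∑ _i : Fin m, l ^ 2) := sqrt_le_sqrt (Finset.sum_le_sum fun i _ ↦ hcoord i)
    _ = √m * l := by simp [sqrt_mul (Nat.cast_nonneg m), sqrt_sq hl]

lemma cube_eq_preimage_closedBall (z : EuclideanSpace ℝ (Fin m)) {l : ℝ} (hl : 0 ≤ l) :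
    cube z l = WithLp.ofLp ⁻¹' Metric.closedBall (WithLp.ofLp z) (l / 2) := by
  ext y
  simp [cube, dist_pi_le_iff (by positivity : 0 ≤ l / 2), Real.dist_eq]

lemma measurableSet_cube (z : EuclideanSpace ℝ (Fin m)) {l : ℝ} (hl : 0 ≤ l) :
    MeasurableSet (cube z l) :=
  cube_eq_preimage_closedBall z hl ▸
    measurableSet_closedBall.preimage (WithLp.measurable_ofLp 2 _)

lemma volume_cube (z : EuclideanSpace ℝ (Fin m)) {l : ℝ} (hl : 0 ≤ l) :
    volume (cube z l) = ENNReal.ofReal (l ^ m) := by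
  rw [cube_eq_preimage_closedBall z hl,
    (PiLp.volume_preserving_ofLp (Fin m)).measure_preimage
      measurableSet_closedBall.nullMeasurableSet,
    Real.volume_pi_closedBall _ (by positivity)]
  simp [mul_div_cancel₀]

end Cube

theorem stmt4_general (m : ℕ) (hm : 1 ≤ m) (lam₂ β : ℝ) (hβ : 0 < β)
    (hβm : β ≤ (m : ℝ) * (lam₂ - 2) / 2) :
    ∃ C > 0, ∀ (lJ : ℝ), 0 < lJ → ∀ zJ x₂ z₂ : EuclideanSpace ℝ (Fin m),
      z₂ ∈ cube zJ lJ → 4 * Real.sqrt m * lJ ≤ ‖x₂ - z₂‖ →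
      (∫ t₂ in Ioo 0 (2 * lJ), ∫ y₂ : EuclideanSpace ℝ (Fin m),
          (∫ z₂' in cube zJ lJ,
            (t₂ / (t₂ + ‖x₂ - y₂‖)) ^ ((m : ℝ) * lam₂) *
              (t₂ ^ (2 * β) / (t₂ + ‖y₂ - z₂'‖) ^ (2 * (m : ℝ) + 2 * β))) /
            t₂ ^ ((m : ℝ) + 1)) ≤
        C * lJ ^ ((m : ℝ) + 2 * β) * ‖x₂ - z₂‖ ^ (-(2 * (m : ℝ)) - 2 * β) := by
  have hmp : (m : ℝ) < 2 * m + 2 * β := by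
    have : (1 : ℝ) ≤ m := by exact_mod_cast hm
    linarith
  have hpq : 2 * (m : ℝ) + 2 * β ≤ m * lam₂ := by linarith
  set I : ℝ → ℝ := fun r ↦ ∫ u : EuclideanSpace ℝ (Fin m), (1 + ‖u‖) ^ (-r)
  have hIp : 0 < I (2 * m + 2 * β) :=
    integral_one_add_norm_rpow_neg_pos volume (by simpa using hmp)
  have hIq : 0 < I (m * lam₂) :=
    integral_one_add_norm_rpow_neg_pos volume (by simpa using hmp.trans_le hpq)
  refine ⟨2 ^ (2 * β) / (2 * β) * (3 / 8) ^ (-(2 * (m : ℝ) + 2 * β)) *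
    (I (2 * m + 2 * β) + I (m * lam₂)), by positivity, fun lJ hlJ zJ x₂ z₂ hz hx ↦ ?_⟩
  set R := ‖x₂ - z₂‖
  have hR : 0 < R := lt_of_lt_of_le (by positivity) hx
  have hJx : ∀ z ∈ cube zJ lJ, 2 * (3 / 8 * R) ≤ ‖x₂ - z‖ := fun z hz' ↦ by
    have := norm_sub_le_of_mem_cube hlJ.le hz hz'
    linarith [norm_sub_le_norm_sub_add_norm_sub x₂ z z₂, norm_sub_rev z z₂]
  have key := integral_Ioo_integral_setIntegral_kernel_le volume (measurableSet_cube zJ hlJ.le)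
    (by simp [volume_cube zJ hlJ.le]) (by positivity : 0 ≤ 2 * lJ) (by positivity : 0 < 3 / 8 * R)
    (by simpa using hmp) hpq (by positivity : 0 < 2 * β) hJx
  simp only [finrank_euclideanSpace_fin, measureReal_def, volume_cube zJ hlJ.le,
    ENNReal.toReal_ofReal (pow_nonneg hlJ.le m)] at key
  refine key.trans_eq ?_
  rw [mul_rpow (by norm_num) hlJ.le, mul_rpow (by norm_num) hR.le, rpow_add hlJ, rpow_natCast,
    show -(2 * (m : ℝ)) - 2 * β = -(2 * m + 2 * β) by ring]
  ring

theorem stmt4 (m : ℕ) (hm : 1 ≤ m) (lam₂ β : ℝ) (hlam : 2 < lam₂) (hβ : 0 < β)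
    (hβm : β ≤ (m : ℝ) * (lam₂ - 2) / 2) :
    ∃ C > 0, ∀ (lJ : ℝ), 0 < lJ → ∀ zJ x₂ z₂ : EuclideanSpace ℝ (Fin m),
      z₂ ∈ cube zJ lJ → 4 * Real.sqrt m * lJ ≤ ‖x₂ - z₂‖ →
      (∫ t₂ in Ioo 0 (2 * lJ), ∫ y₂ : EuclideanSpace ℝ (Fin m),
          (∫ z₂' in cube zJ lJ,
            (t₂ / (t₂ + ‖x₂ - y₂‖)) ^ ((m : ℝ) * lam₂) *
              (t₂ ^ (2 * β) / (t₂ + ‖y₂ - z₂'‖) ^ (2 * (m : ℝ) + 2 * β))) /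
            t₂ ^ ((m : ℝ) + 1)) ≤
        C * lJ ^ ((m : ℝ) + 2 * β) * ‖x₂ - z₂‖ ^ (-(2 * (m : ℝ)) - 2 * β) :=
  stmt4_general m hm lam₂ β hβ hβm
end
end
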